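/- arXiv:0708.2078 — 3 statements merged into one kernel-verified Lean document; each statement's English description precedes it below -/
import Mathlib

section
/- Let K be a field and A = K[x]. Let M = A^{1×3}/(A^{1×2}R) where R is the 2×3 matrix with rows (x^2 + c, 0, -c) and (0, x^2 + c, -c) for a nonzero constant c ∈ K. Then the torsion submodule of M is nonzero and is annihilated by the ideal generated by x^2 + c. -/
/-!
Write `p = X² + c`. Modulo the relations `(p, 0, -c)` and `(0, p, -c)`, a vector `w` satisfies
`p • w ≡ 0` as soon as `p w₂ = -c (w₀ + w₁)`, the witnesses being `w₀` and `w₁`. If `a • w ≡ 0`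
for some nonzero `a`, then `a w₀ = u p`, `a w₁ = t p` and `a w₂ = -c (u + t)`, so multiplying the
last equation by `p` gives `a (p w₂) = a (-c (w₀ + w₁))`, and cancelling `a` shows that the torsion
is killed by `p`. The class of `(1, -1, 0)` is torsion, since `p • (1, -1, 0)` is the difference of
the relations, and nonzero, since otherwise `1 = u p` would make `p` a unit.
-/

open Polynomial
open scoped nonZeroDivisors

namespace Bipendulum

variable {A : Type*} [CommRing A]

abbrev relations (p q : A) : Submodule A (Fin 3 → A) :=
  Submodule.span A {![p, 0, q], ![0, p, q]}

lemma smul_mem_relations {p q : A} {w : Fin 3 → A} (h : p * w 2 = q * (w 0 + w 1)) :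
    p • w ∈ relations p q := by
  refine Submodule.mem_span_pair.mpr ⟨w 0, w 1, ?_⟩
  funext i
  fin_cases i <;> simp [h] <;> ring

lemma mul_eq_of_smul_mem_relations {p q a : A} {w : Fin 3 → A} (ha : a ∈ A⁰)
    (h : a • w ∈ relations p q) : p * w 2 = q * (w 0 + w 1) := by
  obtain ⟨u, t, h⟩ := Submodule.mem_span_pair.mp h
  have h0 : u * p = a * w 0 := by simpa using congrFun h 0
  have h1 : t * p = a * w 1 := by simpa using congrFun h 1
  have h2 : u * q + t * q = a * w 2 := by simpa using congrFun h 2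
  rw [← mul_cancel_left_mem_nonZeroDivisors ha]
  linear_combination q * h0 + q * h1 - p * h2

lemma smul_eq_zero_of_mem_torsion {p q : A} {m : (Fin 3 → A) ⧸ relations p q}
    (hm : m ∈ Submodule.torsion A ((Fin 3 → A) ⧸ relations p q)) : p • m = 0 := by
  obtain ⟨⟨a, ha⟩, ham⟩ := (Submodule.mem_torsion_iff m).mp hm
  obtain ⟨w, rfl⟩ := Submodule.Quotient.mk_surjective _ m
  rw [Submonoid.mk_smul, ← Submodule.Quotient.mk_smul, Submodule.Quotient.mk_eq_zero] at ham
  rw [← Submodule.Quotient.mk_smul, Submodule.Quotient.mk_eq_zero]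
  exact smul_mem_relations (mul_eq_of_smul_mem_relations ha ham)

lemma mk_mem_torsion {p q : A} (hp : p ∈ A⁰) :
    Submodule.Quotient.mk (p := relations p q) ![1, -1, 0] ∈
      Submodule.torsion A ((Fin 3 → A) ⧸ relations p q) := by
  refine (Submodule.mem_torsion_iff _).mpr ⟨⟨p, hp⟩, ?_⟩
  rw [Submonoid.mk_smul, ← Submodule.Quotient.mk_smul, Submodule.Quotient.mk_eq_zero]
  exact smul_mem_relations (by simp)

lemma mk_ne_zero {p q : A} (hp : ¬IsUnit p) :
    Submodule.Quotient.mk (p := relations p q) ![1, -1, 0] ≠ 0 := by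
  rw [ne_eq, Submodule.Quotient.mk_eq_zero, Submodule.mem_span_pair]
  rintro ⟨u, t, h⟩
  have h0 : u * p = 1 := by simpa using congrFun h 0
  exact hp (IsUnit.of_mul_eq_one_right u h0)

lemma torsion_ne_bot {p q : A} (hp : p ∈ A⁰) (hpu : ¬IsUnit p) :
    Submodule.torsion A ((Fin 3 → A) ⧸ relations p q) ≠ ⊥ :=
  Submodule.ne_bot_iff _ |>.mpr ⟨_, mk_mem_torsion hp, mk_ne_zero hpu⟩

end Bipendulum

open Bipendulum in
theorem stmt_0_general {K : Type*} [Field K] (c : K) :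
    Submodule.torsion (Polynomial K)
      ((Fin 3 → Polynomial K) ⧸ Submodule.span (Polynomial K)
        ({![X ^ 2 + C c, 0, -C c], ![0, X ^ 2 + C c, -C c]} :
          Set (Fin 3 → Polynomial K))) ≠ ⊥ ∧
    ∀ m ∈ Submodule.torsion (Polynomial K)
      ((Fin 3 → Polynomial K) ⧸ Submodule.span (Polynomial K)
        ({![X ^ 2 + C c, 0, -C c], ![0, X ^ 2 + C c, -C c]} :
          Set (Fin 3 → Polynomial K))),
      (X ^ 2 + C c) • m = 0 := by
  have hp : X ^ 2 + C c ∈ (Polynomial K)⁰ :=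
    mem_nonZeroDivisors_of_ne_zero (X_pow_add_C_ne_zero two_pos c)
  have hpu : ¬IsUnit (X ^ 2 + C c) := fun hu => by
    simpa using natDegree_eq_zero_of_isUnit hu
  exact ⟨torsion_ne_bot hp hpu, fun _ => smul_eq_zero_of_mem_torsion⟩

theorem stmt_0 {K : Type*} [Field K] (c : K) (hc : c ≠ 0) :
    Submodule.torsion (Polynomial K)
      ((Fin 3 → Polynomial K) ⧸ Submodule.span (Polynomial K)
        ({![X ^ 2 + C c, 0, -C c], ![0, X ^ 2 + C c, -C c]} :
          Set (Fin 3 → Polynomial K))) ≠ ⊥ ∧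
    ∀ m ∈ Submodule.torsion (Polynomial K)
      ((Fin 3 → Polynomial K) ⧸ Submodule.span (Polynomial K)
        ({![X ^ 2 + C c, 0, -C c], ![0, X ^ 2 + C c, -C c]} :
          Set (Fin 3 → Polynomial K))),
      (X ^ 2 + C c) • m = 0 :=
  stmt_0_general c
end

section
/- Let K be a field and A = K[x]. Let M = A^{1×3}/(A^{1×2}R) where R is the 2×3 matrix with rows (x^2 + c₁, 0, -c₁) and (0, x^2 + c₂, -c₂) for distinct nonzero constants c₁ ≠ c₂ in K. Then M is torsion-free. -/
open Polynomial

/-!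
With `f = X² + c₁` and `g = X² + c₂`, the map `A³ → A`, `v ↦ c₁ g v₀ + c₂ f v₁ + f g v₂` kills both
rows of `R`, and since `f` and `g` are coprime (their difference is the unit `c₂ - c₁`) its kernel
is exactly the row module. Hence `M` embeds into `A`, which is torsion-free.
-/

theorem Submodule.torsion_quotient_ker_eq_bot {R M P : Type*} [CommRing R] [IsDomain R]
    [AddCommGroup M] [Module R M] [AddCommGroup P] [Module R P] [Module.IsTorsionFree R P]
    (φ : M →ₗ[R] P) : torsion R (M ⧸ LinearMap.ker φ) = ⊥ := by
  have hinj : Function.Injective ((LinearMap.ker φ).liftQ φ le_rfl) :=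
    LinearMap.ker_eq_bot.mp ((LinearMap.ker φ).ker_liftQ_eq_bot' φ rfl)
  have : Module.IsTorsionFree R (M ⧸ LinearMap.ker φ) :=
    hinj.moduleIsTorsionFree _ (map_smul _)
  exact isTorsionFree_iff_torsion_eq_bot.mp this

theorem ker_linearCombination_eq_span_pair {R : Type*} [CommRing R] [IsDomain R] {f g a b : R}
    (hf : IsCoprime f (a * g)) (hg : IsCoprime g (b * f)) (hfg : f * g ≠ 0) :
    LinearMap.ker (Fintype.linearCombination R ![a * g, b * f, f * g]) =
      Submodule.span R {![f, 0, -a], ![0, g, -b]} := by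
  have hφ (v : Fin 3 → R) :
      Fintype.linearCombination R ![a * g, b * f, f * g] v =
        v 0 * (a * g) + v 1 * (b * f) + v 2 * (f * g) := by
    simp [Fintype.linearCombination_apply, Fin.sum_univ_three]
  refine le_antisymm (fun v hv ↦ ?_) ?_
  · rw [LinearMap.mem_ker, hφ] at hv
    obtain ⟨p, hp⟩ : f ∣ v 0 :=
      hf.dvd_of_dvd_mul_left ⟨-(b * v 1 + g * v 2), by linear_combination hv⟩
    obtain ⟨q, hq⟩ : g ∣ v 1 :=
      hg.dvd_of_dvd_mul_left ⟨-(a * v 0 + f * v 2), by linear_combination hv⟩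
    have hv2 : v 2 = -(a * p + b * q) := by
      refine mul_left_cancel₀ hfg ?_
      rw [hp, hq] at hv
      linear_combination hv
    refine Submodule.mem_span_pair.mpr ⟨p, q, funext fun i ↦ ?_⟩
    fin_cases i <;>
      simp only [Fin.zero_eta, Fin.mk_one, Fin.reduceFinMk, Pi.add_apply, Pi.smul_apply,
        smul_eq_mul, Matrix.cons_val_zero, Matrix.cons_val_one, Matrix.cons_val, hp, hq, hv2] <;>
      ring
  · rw [Submodule.span_le]
    rintro w (rfl | rfl) <;>
      simp only [SetLike.mem_coe, LinearMap.mem_ker, hφ, Matrix.cons_val_zero, Matrix.cons_val_one,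
        Matrix.cons_val] <;>
      ring

theorem Polynomial.isCoprime_add_C_add_C {K : Type*} [Field K] (p : K[X]) {a b : K} (h : a ≠ b) :
    IsCoprime (p + C a) (p + C b) := by
  refine ⟨-C (b - a)⁻¹, C (b - a)⁻¹, ?_⟩
  rw [← C_1, ← inv_mul_cancel₀ (sub_ne_zero.mpr h.symm), C_mul, C_sub]
  ring

theorem stmt_1 {K : Type*} [Field K] (c₁ c₂ : K) (h₁ : c₁ ≠ 0) (h₂ : c₂ ≠ 0)
    (hne : c₁ ≠ c₂) :
    Submodule.torsion (Polynomial K)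
      ((Fin 3 → Polynomial K) ⧸ Submodule.span (Polynomial K)
        ({![X ^ 2 + C c₁, 0, -C c₁], ![0, X ^ 2 + C c₂, -C c₂]} :
          Set (Fin 3 → Polynomial K))) = ⊥ := by
  have hcop := isCoprime_add_C_add_C (X ^ 2) hne
  have hu₁ : IsUnit (C c₁) := isUnit_C.mpr h₁.isUnit
  have hu₂ : IsUnit (C c₂) := isUnit_C.mpr h₂.isUnit
  have hne0 : (X ^ 2 + C c₁) * (X ^ 2 + C c₂) ≠ 0 :=
    mul_ne_zero (monic_X_pow_add_C c₁ two_ne_zero).ne_zero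
      (monic_X_pow_add_C c₂ two_ne_zero).ne_zero
  rw [← ker_linearCombination_eq_span_pair ((isCoprime_mul_unit_left_right hu₁ _ _).mpr hcop)
    ((isCoprime_mul_unit_left_right hu₂ _ _).mpr hcop.symm) hne0]
  exact Submodule.torsion_quotient_ker_eq_bot _
end

section
/- Let K be a field, A = K[x], and let R be the 2×3 matrix with rows (x^2 + c₁, 0, -c₁) and (0, x^2 + c₂, -c₂) with c₁ ≠ c₂ nonzero in K. Then R admits a right inverse, i.e., there exists a 3×2 matrix S over A with R·S = I₂. -/
/-!
The two diagonal entries `X ^ 2 + C c₁` and `X ^ 2 + C c₂` differ by the unit `C (c₁ - c₂)`,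
so they are coprime, while the last column consists of units. For any such matrix
`[[a, 0, -u], [0, b, -v]]` a Bézout relation `x * a + y * b = 1` yields a right inverse.
-/

open Polynomial

theorem isCoprime_of_isUnit_sub {R : Type*} [CommRing R] {a b : R} (h : IsUnit (a - b)) :
    IsCoprime a b := by
  obtain ⟨e, he⟩ := h.exists_left_inv
  exact ⟨e, -e, by linear_combination he⟩

theorem Matrix.exists_mul_eq_one_of_isCoprime {R : Type*} [CommRing R] {a b u v : R}
    (hab : IsCoprime a b) (hu : IsUnit u) (hv : IsUnit v) :
    ∃ S : Matrix (Fin 3) (Fin 2) R, Matrix.of ![![a, 0, -u], ![0, b, -v]] * S = 1 := by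
  obtain ⟨x, y, hxy⟩ := hab
  obtain ⟨u, rfl⟩ := hu
  obtain ⟨v, rfl⟩ := hv
  -- In each column the last entry is a multiple of the other row's diagonal entry, which makes
  -- the off-diagonal product vanish; the diagonal product is then `x * a + y * b`.
  refine ⟨Matrix.of ![![x, -↑(v⁻¹ * u) * x], ![-↑(u⁻¹ * v) * y, y],
    ![-↑u⁻¹ * y * b, -↑v⁻¹ * x * a]], ?_⟩
  ext i j
  fin_cases i <;> fin_cases j <;> simp [Matrix.mul_apply, Fin.sum_univ_succ]
  · linear_combination hxy + y * b * u.mul_inv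
  · ring
  · ring
  · linear_combination hxy + x * a * v.mul_inv

theorem stmt_2 {K : Type*} [Field K] (c₁ c₂ : K) (h₁ : c₁ ≠ 0) (h₂ : c₂ ≠ 0)
    (hne : c₁ ≠ c₂) :
    ∃ S : Matrix (Fin 3) (Fin 2) (Polynomial K),
      (Matrix.of ![![X ^ 2 + C c₁, 0, -C c₁], ![0, X ^ 2 + C c₂, -C c₂]]) * S = 1 := by
  have hcoprime : IsCoprime (X ^ 2 + C c₁) (X ^ 2 + C c₂) := by
    refine isCoprime_of_isUnit_sub ?_
    rw [add_sub_add_left_eq_sub, ← C_sub]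
    exact isUnit_C.mpr (sub_ne_zero.mpr hne).isUnit
  exact Matrix.exists_mul_eq_one_of_isCoprime hcoprime
    (isUnit_C.mpr h₁.isUnit) (isUnit_C.mpr h₂.isUnit)
end
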